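/- Let F : ℕ → ℤ satisfy F 0 = 0, F 1 = 1, F (n+2) = -2 F (n+1) + 2 F n. Then for all n, as real numbers: F(n+1) * F(n) = (1/12) * ((-1+√3)^{2n+1} + (-1-√3)^{2n+1} - (-2)^{n+1}). -/

import Mathlib

/-!
With `α = -1 + √3` and `β = -1 - √3`, the roots of `X² + 2X - 2`, the sequence has the Binet
form `(α - β) F n = αⁿ - βⁿ`. Multiplying two consecutive instances gives
`(α - β)² F (n+1) F n = α^(2n+1) + β^(2n+1) - (αβ)ⁿ (α + β)`, and here `(α - β)² = 12`,
`αβ = α + β = -2`.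
-/

section LucasSequence

variable {R : Type*} [CommRing R]

theorem sub_mul_eq_pow_sub_pow_of_lucas {F : ℕ → R} {α β : R} (h0 : F 0 = 0) (h1 : F 1 = 1)
    (hrec : ∀ n, F (n + 2) = (α + β) * F (n + 1) - α * β * F n) (n : ℕ) :
    (α - β) * F n = α ^ n - β ^ n := by
  induction n using Nat.twoStepInduction with
  | zero => simp [h0]
  | one => simp [h1]
  | more n ih₀ ih₁ =>
    rw [hrec, mul_sub, mul_left_comm, ih₁, mul_left_comm, ih₀]
    ring

theorem sq_sub_mul_mul_succ_of_lucas {F : ℕ → R} {α β : R} (h0 : F 0 = 0) (h1 : F 1 = 1)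
    (hrec : ∀ n, F (n + 2) = (α + β) * F (n + 1) - α * β * F n) (n : ℕ) :
    (α - β) ^ 2 * (F (n + 1) * F n) =
      α ^ (2 * n + 1) + β ^ (2 * n + 1) - (α * β) ^ n * (α + β) := by
  have binet := sub_mul_eq_pow_sub_pow_of_lucas h0 h1 hrec
  calc (α - β) ^ 2 * (F (n + 1) * F n) = ((α - β) * F (n + 1)) * ((α - β) * F n) := by ring
    _ = _ := by rw [binet, binet]; ring

end LucasSequence

theorem stmt_5 (F : ℕ → ℤ) (h0 : F 0 = 0) (h1 : F 1 = 1)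
    (hrec : ∀ n, F (n+2) = -2 * F (n+1) + 2 * F n) :
    ∀ n : ℕ, ((F (n+1) : ℝ)) * (F n : ℝ) =
      (1/12) * ((-1 + Real.sqrt 3)^(2*n+1) + (-1 - Real.sqrt 3)^(2*n+1) - (-2)^(n+1)) := by
  intro n
  have h3 : Real.sqrt 3 ^ 2 = 3 := Real.sq_sqrt (by norm_num)
  have hsum : (-1 + Real.sqrt 3) + (-1 - Real.sqrt 3) = -2 := by ring
  have hprod : (-1 + Real.sqrt 3) * (-1 - Real.sqrt 3) = -2 := by linear_combination -h3
  have hdiff : ((-1 + Real.sqrt 3) - (-1 - Real.sqrt 3)) ^ 2 = 12 := by linear_combination 4 * h3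
  have hrecℝ : ∀ k, (F (k + 2) : ℝ) = ((-1 + Real.sqrt 3) + (-1 - Real.sqrt 3)) * F (k + 1) -
      (-1 + Real.sqrt 3) * (-1 - Real.sqrt 3) * F k := by
    intro k
    rw [hsum, hprod, hrec]
    push_cast
    ring
  have key := sq_sub_mul_mul_succ_of_lucas (F := fun k ↦ (F k : ℝ))
    (by simp [h0]) (by simp [h1]) hrecℝ n
  rw [hdiff, hprod, hsum] at key
  linear_combination key / 12
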